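/- For positive integers n, k with k ≥ 2 and any positive integer vector s = (s_1,...,s_k), the chromatic number of the s-stable Kneser graph KG(n,k)_{s-stab} is at most n - (s_1 + ... + s_{k-1}), provided n ≥ s_1 + ... + s_{k-1} + 1 and the graph has at least one vertex. -/

import Mathlib

/-!
Colour a stable set by its least element `a`. Stability gives
`a + s₁ + ⋯ + s_{k-1} ≤ max A ≤ n`, so only the colours `1, …, n - (s₁ + ⋯ + s_{k-1})` occur,
and two sets with the same least element intersect.
-/

/-- The `j`-th smallest element (0-indexed) of a finite set of naturals (default `0`). -/
def sortedNth (A : Finset ℕ) (j : ℕ) : ℕ := (A.sort (· ≤ ·)).getD j 0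

/-- `A` is an `s`-stable `k`-subset of `[n] = {1,…,n}`: writing `A(0) < A(1) < ⋯ < A(k-1)`
for its elements, `A(j+1) - A(j) ≥ s j` for `j + 1 < k`, and `A(k-1) - A(0) ≤ n - s (k-1)`
(formulated additively to avoid truncated subtraction). -/
def VecStable (n k : ℕ) (s : ℕ → ℕ) (A : Finset ℕ) : Prop :=
  A ⊆ Finset.Icc 1 n ∧ A.card = k ∧
    (∀ j, j + 1 < k → sortedNth A j + s j ≤ sortedNth A (j + 1)) ∧
    sortedNth A (k - 1) + s (k - 1) ≤ sortedNth A 0 + n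

/-- The `s`-stable Kneser graph `KG(n,k)_{s-stab}`: vertices are the `s`-stable
`k`-subsets of `[n]`, adjacent iff disjoint. -/
def stableKneser (n k : ℕ) (s : ℕ → ℕ) :
    SimpleGraph {A : Finset ℕ // VecStable n k s A} where
  Adj X Y := X ≠ Y ∧ Disjoint X.1 Y.1
  symm := ⟨fun _ _ h => ⟨h.1.symm, h.2.symm⟩⟩
  loopless := ⟨fun _ h => h.1 rfl⟩

/-- The set `U = {1, s₁+1, s₁+s₂+1, …}` (the `j`-th element is `s₁+⋯+s_j + 1`). -/
def Uset (k : ℕ) (s : ℕ → ℕ) : Finset ℕ :=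
  (Finset.range k).image (fun j => (∑ i ∈ Finset.range j, s i) + 1)

/-- The set `V = {2, s₁+2, s₁+s₂+2, …}`. -/
def Vset (k : ℕ) (s : ℕ → ℕ) : Finset ℕ :=
  (Finset.range k).image (fun j => (∑ i ∈ Finset.range j, s i) + 2)

open Finset

lemma sortedNth_mem {A : Finset ℕ} {j : ℕ} (hj : j < #A) : sortedNth A j ∈ A := by
  rw [sortedNth, List.getD_eq_getElem _ _ (by simpa using hj)]
  exact (A.mem_sort _).1 (List.getElem_mem _)

namespace VecStable

variable {n k : ℕ} {s : ℕ → ℕ} {A : Finset ℕ}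

lemma sortedNth_mem (hA : VecStable n k s A) {j : ℕ} (hj : j < k) : sortedNth A j ∈ A :=
  _root_.sortedNth_mem (hA.2.1 ▸ hj)

lemma sortedNth_zero_add_sum_le (hA : VecStable n k s A) {j : ℕ} (hj : j < k) :
    sortedNth A 0 + ∑ i ∈ range j, s i ≤ sortedNth A j := by
  induction j with
  | zero => simp
  | succ j ih =>
    rw [sum_range_succ]
    have := hA.2.2.1 j hj
    have := ih (by omega)
    omega

lemma sortedNth_zero_mem_Icc (hA : VecStable n k s A) (hk : 0 < k) :
    sortedNth A 0 ∈ Icc 1 (n - ∑ i ∈ range (k - 1), s i) := by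
  have h0 := (mem_Icc.1 (hA.1 (hA.sortedNth_mem hk))).1
  have hlast := (mem_Icc.1 (hA.1 (hA.sortedNth_mem (j := k - 1) (by omega)))).2
  have hchain := hA.sortedNth_zero_add_sum_le (j := k - 1) (by omega)
  exact mem_Icc.2 ⟨h0, by omega⟩

end VecStable

def stableKneser.minColoring {n k : ℕ} {s : ℕ → ℕ} (hk : 0 < k) :
    (stableKneser n k s).Coloring (Fin (n - ∑ i ∈ range (k - 1), s i)) :=
  SimpleGraph.Coloring.mk
    (fun A => ⟨sortedNth A.1 0 - 1, by
      have := mem_Icc.1 (A.2.sortedNth_zero_mem_Icc hk)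
      omega⟩)
    (fun {X Y} hXY hcol => by
      have hX := mem_Icc.1 (X.2.sortedNth_zero_mem_Icc hk)
      have hY := mem_Icc.1 (Y.2.sortedNth_zero_mem_Icc hk)
      have hmin : sortedNth X.1 0 = sortedNth Y.1 0 := by
        rw [Fin.mk.injEq] at hcol
        omega
      exact disjoint_left.1 hXY.2 (X.2.sortedNth_mem hk) (hmin ▸ Y.2.sortedNth_mem hk))

theorem stmt1_general (n k : ℕ) (s : ℕ → ℕ) (hk : 2 ≤ k) :
    (stableKneser n k s).chromaticNumber ≤
      ((n - ∑ i ∈ Finset.range (k - 1), s i : ℕ) : ℕ∞) := by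
  have hk₀ : 0 < k := by omega
  simpa using (stableKneser.minColoring (n := n) (s := s) hk₀).colorable.chromaticNumber_le

/-- `χ(KG(n,k)_{s-stab}) ≤ n - (s₁+⋯+s_{k-1})` for a positive vector `s`,
provided `n ≥ s₁+⋯+s_{k-1} + 1` and the graph has at least one vertex. -/
theorem stmt1 (n k : ℕ) (s : ℕ → ℕ) (hk : 2 ≤ k)
    (hs : ∀ i, i < k → 1 ≤ s i)
    (hn : (∑ i ∈ Finset.range (k - 1), s i) + 1 ≤ n)
    (hne : Nonempty {A : Finset ℕ // VecStable n k s A}) :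
    (stableKneser n k s).chromaticNumber ≤
      ((n - ∑ i ∈ Finset.range (k - 1), s i : ℕ) : ℕ∞) :=
  stmt1_general n k s hk
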